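/- arXiv:0908.4038 — 6 statements merged into one kernel-verified Lean document; each statement's English description precedes it below -/
import Mathlib

section
/- Let (P, L) be a finite projective plane of order q, let n = q^2 + q + 1, and let A ⊆ P be nonempty. Then the number of lines ℓ ∈ L with ℓ ∩ A = ∅ is at most n^{3/2} / |A|. -/
open Finset

set_option linter.unusedSectionVars false
set_option maxHeartbeats 1000000

variable {P : Type} [Fintype P] [DecidableEq P]

lemma line_unique {L : Finset (Finset P)}
    (h1 : ∀ p₁ p₂ : P, p₁ ≠ p₂ → ∃! ℓ, ℓ ∈ L ∧ p₁ ∈ ℓ ∧ p₂ ∈ ℓ)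
    {p x : P} (hpx : p ≠ x) {ℓ ℓ' : Finset P}
    (hℓ : ℓ ∈ L) (hp : p ∈ ℓ) (hx : x ∈ ℓ)
    (hℓ' : ℓ' ∈ L) (hp' : p ∈ ℓ') (hx' : x ∈ ℓ') : ℓ = ℓ' := by
  obtain ⟨m, _, hu⟩ := h1 p x hpx
  rw [hu ℓ ⟨hℓ, hp, hx⟩, hu ℓ' ⟨hℓ', hp', hx'⟩]

lemma exists_line_avoid {L : Finset (Finset P)}
    (h1 : ∀ p₁ p₂ : P, p₁ ≠ p₂ → ∃! ℓ, ℓ ∈ L ∧ p₁ ∈ ℓ ∧ p₂ ∈ ℓ)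
    (h4 : ∃ s : Finset P, s.card = 4 ∧ ∀ ℓ ∈ L, (s ∩ ℓ).card ≤ 2)
    (p : P) : ∃ ℓ ∈ L, p ∉ ℓ := by
  obtain ⟨s, hs4, hs2⟩ := h4
  have h3le : 3 ≤ (s.erase p).card := by
    have := Finset.pred_card_le_card_erase (a := p) (s := s)
    omega
  obtain ⟨t, hts, htc⟩ := Finset.exists_subset_card_eq h3le
  obtain ⟨x, y, z, hxy, hxz, hyz, rfl⟩ := Finset.card_eq_three.mp htc
  have hxs : x ∈ s.erase p := hts (by simp)
  have hys : y ∈ s.erase p := hts (by simp)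
  have hzs : z ∈ s.erase p := hts (by simp [hxy, hxz, hyz])
  have hpx : x ≠ p := Finset.ne_of_mem_erase hxs
  obtain ⟨ℓ₁, ⟨hℓ₁L, hxℓ₁, hyℓ₁⟩, -⟩ := h1 x y hxy
  obtain ⟨ℓ₂, ⟨hℓ₂L, hxℓ₂, hzℓ₂⟩, -⟩ := h1 x z hxz
  by_cases hp1 : p ∈ ℓ₁
  · by_cases hp2 : p ∈ ℓ₂
    · exfalso
      have heq : ℓ₁ = ℓ₂ :=
        line_unique h1 hpx.symm hℓ₁L hp1 hxℓ₁ hℓ₂L hp2 hxℓ₂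
      have hsub : ({x, y, z} : Finset P) ⊆ s ∩ ℓ₁ := by
        intro w hw
        simp only [Finset.mem_insert, Finset.mem_singleton] at hw
        rcases hw with rfl | rfl | rfl
        · exact Finset.mem_inter.mpr ⟨Finset.mem_of_mem_erase hxs, hxℓ₁⟩
        · exact Finset.mem_inter.mpr ⟨Finset.mem_of_mem_erase hys, hyℓ₁⟩
        · exact Finset.mem_inter.mpr ⟨Finset.mem_of_mem_erase hzs, heq ▸ hzℓ₂⟩
      have := Finset.card_le_card hsub
      have := hs2 ℓ₁ hℓ₁L
      omega
    · exact ⟨ℓ₂, hℓ₂L, hp2⟩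
  · exact ⟨ℓ₁, hℓ₁L, hp1⟩

lemma lines_through_card {q : ℕ} {L : Finset (Finset P)}
    (h1 : ∀ p₁ p₂ : P, p₁ ≠ p₂ → ∃! ℓ, ℓ ∈ L ∧ p₁ ∈ ℓ ∧ p₂ ∈ ℓ)
    (h2 : ∀ ℓ₁ ∈ L, ∀ ℓ₂ ∈ L, ℓ₁ ≠ ℓ₂ → ∃! p : P, p ∈ ℓ₁ ∧ p ∈ ℓ₂)
    (h3 : ∀ ℓ ∈ L, ℓ.card = q + 1)
    {p : P} {ℓ₀ : Finset P} (hℓ₀ : ℓ₀ ∈ L) (hpℓ₀ : p ∉ ℓ₀) :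
    (L.filter (fun ℓ => p ∈ ℓ)).card = q + 1 := by
  rw [← h3 ℓ₀ hℓ₀]
  apply Finset.card_bij (fun ℓ hℓ =>
    (h2 ℓ (Finset.mem_filter.mp hℓ).1 ℓ₀ hℓ₀
      (fun h => hpℓ₀ (h ▸ (Finset.mem_filter.mp hℓ).2))).exists.choose)
  · intro ℓ hℓ
    exact (h2 ℓ (Finset.mem_filter.mp hℓ).1 ℓ₀ hℓ₀
      (fun h => hpℓ₀ (h ▸ (Finset.mem_filter.mp hℓ).2))).exists.choose_spec.2
  · intro ℓ hℓ ℓ' hℓ' heq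
    set c := (h2 ℓ (Finset.mem_filter.mp hℓ).1 ℓ₀ hℓ₀
      (fun h => hpℓ₀ (h ▸ (Finset.mem_filter.mp hℓ).2))).exists.choose with hc
    have hspec := (h2 ℓ (Finset.mem_filter.mp hℓ).1 ℓ₀ hℓ₀
      (fun h => hpℓ₀ (h ▸ (Finset.mem_filter.mp hℓ).2))).exists.choose_spec
    have hspec' := (h2 ℓ' (Finset.mem_filter.mp hℓ').1 ℓ₀ hℓ₀
      (fun h => hpℓ₀ (h ▸ (Finset.mem_filter.mp hℓ').2))).exists.choose_spec
    rw [← heq] at hspec'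
    have hcp : p ≠ c := fun h => hpℓ₀ (h ▸ hspec.2)
    exact line_unique h1 hcp (Finset.mem_filter.mp hℓ).1
      (Finset.mem_filter.mp hℓ).2 hspec.1 (Finset.mem_filter.mp hℓ').1
      (Finset.mem_filter.mp hℓ').2 hspec'.1
  · intro x hx
    have hpx : p ≠ x := fun h => hpℓ₀ (h ▸ hx)
    obtain ⟨ℓ, ⟨hℓL, hpℓ, hxℓ⟩, -⟩ := h1 p x hpx
    have hmem : ℓ ∈ L.filter (fun ℓ => p ∈ ℓ) := Finset.mem_filter.mpr ⟨hℓL, hpℓ⟩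
    refine ⟨ℓ, hmem, ?_⟩
    have hne : ℓ ≠ ℓ₀ := fun h => hpℓ₀ (h ▸ hpℓ)
    have huniq := h2 ℓ hℓL ℓ₀ hℓ₀ hne
    have hspec := (h2 ℓ (Finset.mem_filter.mp hmem).1 ℓ₀ hℓ₀
      (fun h => hpℓ₀ (h ▸ (Finset.mem_filter.mp hmem).2))).exists.choose_spec
    obtain ⟨c₀, hc₀, hu⟩ := huniq
    rw [hu _ hspec, hu x ⟨hxℓ, hx⟩]


-- assume lines_through available: state as hyp
lemma card_points {q : ℕ} {L : Finset (Finset P)}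
    (h1 : ∀ p₁ p₂ : P, p₁ ≠ p₂ → ∃! ℓ, ℓ ∈ L ∧ p₁ ∈ ℓ ∧ p₂ ∈ ℓ)
    (h3 : ∀ ℓ ∈ L, ℓ.card = q + 1)
    (hr : ∀ p : P, (L.filter (fun ℓ => p ∈ ℓ)).card = q + 1)
    (p : P) : Fintype.card P = q ^ 2 + q + 1 := by
  classical
  have hdisj : ∀ ℓ ∈ L.filter (fun ℓ => p ∈ ℓ), ∀ ℓ' ∈ L.filter (fun ℓ => p ∈ ℓ),
      ℓ ≠ ℓ' → Disjoint (ℓ.erase p) (ℓ'.erase p) := by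
    intro ℓ hℓ ℓ' hℓ' hne
    rw [Finset.disjoint_left]
    intro x hx hx'
    have hxp : p ≠ x := fun h => (Finset.mem_erase.mp hx).1 h.symm
    exact hne (line_unique h1 hxp (Finset.mem_filter.mp hℓ).1 (Finset.mem_filter.mp hℓ).2
      (Finset.mem_erase.mp hx).2 (Finset.mem_filter.mp hℓ').1 (Finset.mem_filter.mp hℓ').2
      (Finset.mem_erase.mp hx').2)
  have hcover : (L.filter (fun ℓ => p ∈ ℓ)).biUnion (fun ℓ => ℓ.erase p) = Finset.univ.erase p := by
    ext x
    simp only [Finset.mem_biUnion, Finset.mem_erase, Finset.mem_filter, Finset.mem_univ, and_true]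
    constructor
    · rintro ⟨ℓ, ⟨-, -⟩, hx, -⟩
      exact hx
    · intro hx
      obtain ⟨ℓ, ⟨hℓL, hpℓ, hxℓ⟩, -⟩ := h1 p x (fun h => hx (h.symm))
      exact ⟨ℓ, ⟨hℓL, hpℓ⟩, hx, hxℓ⟩
  have hcard := Finset.card_biUnion hdisj
  rw [hcover] at hcard
  have h1' : (Finset.univ.erase p).card = Fintype.card P - 1 := by
    rw [Finset.card_erase_of_mem (Finset.mem_univ p), Finset.card_univ]
  have h2' : ∑ ℓ ∈ L.filter (fun ℓ => p ∈ ℓ), (ℓ.erase p).card = (q + 1) * q := by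
    have herase : ∀ ℓ ∈ L.filter (fun ℓ => p ∈ ℓ), (ℓ.erase p).card = q := by
      intro ℓ hℓ
      rw [Finset.card_erase_of_mem (Finset.mem_filter.mp hℓ).2,
        h3 ℓ (Finset.mem_filter.mp hℓ).1]
      omega
    rw [Finset.sum_congr rfl herase, Finset.sum_const, hr p, smul_eq_mul]
  have hP1 : 1 ≤ Fintype.card P := Fintype.card_pos_iff.mpr ⟨p⟩
  rw [h1', h2'] at hcard
  have hfin : Fintype.card P = (q + 1) * q + 1 := by omega
  rw [hfin]; ring

lemma card_lines {q : ℕ} {L : Finset (Finset P)}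
    (h3 : ∀ ℓ ∈ L, ℓ.card = q + 1)
    (hr : ∀ p : P, (L.filter (fun ℓ => p ∈ ℓ)).card = q + 1)
    (hP : Fintype.card P = q ^ 2 + q + 1) : L.card = q ^ 2 + q + 1 := by
  classical
  have key : ∑ ℓ ∈ L, ℓ.card = ∑ x : P, (L.filter (fun ℓ => x ∈ ℓ)).card := by
    simp only [Finset.card_filter]
    rw [Finset.sum_comm]
    refine Finset.sum_congr rfl (fun ℓ _ => ?_)
    rw [Finset.sum_ite_mem, Finset.univ_inter, Finset.card_eq_sum_ones]
  rw [Finset.sum_congr rfl h3, Finset.sum_const, smul_eq_mul] at key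
  rw [Finset.sum_congr rfl (fun x _ => hr x), Finset.sum_const, smul_eq_mul,
    Finset.card_univ, hP] at key
  have hq1 : 0 < q + 1 := Nat.succ_pos q
  exact Nat.eq_of_mul_eq_mul_right hq1 key

lemma sum_inter_card {q : ℕ} {L : Finset (Finset P)} {A : Finset P}
    (hr : ∀ p : P, (L.filter (fun ℓ => p ∈ ℓ)).card = q + 1) :
    ∑ ℓ ∈ L, (ℓ ∩ A).card = A.card * (q + 1) := by
  have hc : ∀ ℓ : Finset P, (ℓ ∩ A).card = ∑ p ∈ A, if p ∈ ℓ then 1 else 0 := by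
    intro ℓ
    rw [Finset.inter_comm, ← Finset.filter_mem_eq_inter, Finset.card_filter]
  calc ∑ ℓ ∈ L, (ℓ ∩ A).card = ∑ ℓ ∈ L, ∑ p ∈ A, if p ∈ ℓ then 1 else 0 :=
        Finset.sum_congr rfl (fun ℓ _ => hc ℓ)
    _ = ∑ p ∈ A, ∑ ℓ ∈ L, if p ∈ ℓ then 1 else 0 := Finset.sum_comm
    _ = ∑ _p ∈ A, (q + 1) := by
        refine Finset.sum_congr rfl (fun p _ => ?_)
        rw [← Finset.card_filter]; exact hr p
    _ = A.card * (q + 1) := by rw [Finset.sum_const, smul_eq_mul]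

lemma sum_inter_card_sq {q : ℕ} {L : Finset (Finset P)} {A : Finset P}
    (h1 : ∀ p₁ p₂ : P, p₁ ≠ p₂ → ∃! ℓ, ℓ ∈ L ∧ p₁ ∈ ℓ ∧ p₂ ∈ ℓ)
    (hr : ∀ p : P, (L.filter (fun ℓ => p ∈ ℓ)).card = q + 1) :
    ∑ ℓ ∈ L, (ℓ ∩ A).card ^ 2 = A.card * (q + A.card) := by
  have hone : ∀ p p' : P, p ≠ p' → (L.filter (fun ℓ => p ∈ ℓ ∧ p' ∈ ℓ)).card = 1 := by
    intro p p' hne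
    obtain ⟨ℓ, ⟨hℓL, hp, hp'⟩, hu⟩ := h1 p p' hne
    rw [Finset.card_eq_one]
    refine ⟨ℓ, ?_⟩
    ext ℓ'
    simp only [Finset.mem_filter, Finset.mem_singleton]
    constructor
    · rintro ⟨hL', hm, hm'⟩; exact hu ℓ' ⟨hL', hm, hm'⟩
    · rintro rfl; exact ⟨hℓL, hp, hp'⟩
  have hc : ∀ ℓ : Finset P, (ℓ ∩ A).card = ∑ p ∈ A, if p ∈ ℓ then 1 else 0 := by
    intro ℓ
    rw [Finset.inter_comm, ← Finset.filter_mem_eq_inter, Finset.card_filter]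
  have hsq : ∀ ℓ : Finset P,
      (ℓ ∩ A).card ^ 2 = ∑ p ∈ A, ∑ p' ∈ A, if p ∈ ℓ ∧ p' ∈ ℓ then 1 else 0 := by
    intro ℓ
    rw [sq, hc ℓ, Finset.sum_mul_sum]
    refine Finset.sum_congr rfl (fun p _ => Finset.sum_congr rfl (fun p' _ => ?_))
    by_cases hp : p ∈ ℓ <;> by_cases hp' : p' ∈ ℓ <;> simp [hp, hp']
  calc ∑ ℓ ∈ L, (ℓ ∩ A).card ^ 2
      = ∑ ℓ ∈ L, ∑ p ∈ A, ∑ p' ∈ A, if p ∈ ℓ ∧ p' ∈ ℓ then 1 else 0 :=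
        Finset.sum_congr rfl (fun ℓ _ => hsq ℓ)
    _ = ∑ p ∈ A, ∑ ℓ ∈ L, ∑ p' ∈ A, (if p ∈ ℓ ∧ p' ∈ ℓ then 1 else 0) := Finset.sum_comm
    _ = ∑ p ∈ A, ∑ p' ∈ A, ∑ ℓ ∈ L, (if p ∈ ℓ ∧ p' ∈ ℓ then 1 else 0) :=
        Finset.sum_congr rfl (fun p _ => Finset.sum_comm)
    _ = ∑ p ∈ A, ∑ p' ∈ A, (L.filter (fun ℓ => p ∈ ℓ ∧ p' ∈ ℓ)).card :=
        Finset.sum_congr rfl (fun p _ => Finset.sum_congr rfl (fun p' _ => by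
          rw [← Finset.card_filter]))
    _ = ∑ p ∈ A, (q + A.card) := by
        refine Finset.sum_congr rfl (fun p hp => ?_)
        rw [← Finset.add_sum_erase _ _ hp]
        have hdiag : (L.filter (fun ℓ => p ∈ ℓ ∧ p ∈ ℓ)).card = q + 1 := by
          rw [← hr p]
          congr 1
          apply Finset.filter_congr
          intro ℓ _
          simp
        rw [hdiag]
        have hoff : ∑ p' ∈ A.erase p, (L.filter (fun ℓ => p ∈ ℓ ∧ p' ∈ ℓ)).card
            = (A.erase p).card := by
          rw [Finset.card_eq_sum_ones]
          exact Finset.sum_congr rfl (fun p' hp' =>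
            hone p p' (fun h => (Finset.mem_erase.mp hp').1 h.symm))
        rw [hoff, Finset.card_erase_of_mem hp]
        have : 1 ≤ A.card := Finset.card_pos.mpr ⟨p, hp⟩
        omega
    _ = A.card * (q + A.card) := by rw [Finset.sum_const, smul_eq_mul]
theorem projective_plane_expansion
    (q : ℕ) (hq : 2 ≤ q)
    (P : Type) [Fintype P] [DecidableEq P]
    (L : Finset (Finset P))
    (h1 : ∀ p₁ p₂ : P, p₁ ≠ p₂ → ∃! ℓ, ℓ ∈ L ∧ p₁ ∈ ℓ ∧ p₂ ∈ ℓ)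
    (h2 : ∀ ℓ₁ ∈ L, ∀ ℓ₂ ∈ L, ℓ₁ ≠ ℓ₂ → ∃! p : P, p ∈ ℓ₁ ∧ p ∈ ℓ₂)
    (h3 : ∀ ℓ ∈ L, ℓ.card = q + 1)
    (h4 : ∃ s : Finset P, s.card = 4 ∧ ∀ ℓ ∈ L, (s ∩ ℓ).card ≤ 2)
    (A : Finset P) (hA : A.Nonempty) :
    ((L.filter (fun ℓ => ℓ ∩ A = ∅)).card : ℝ) ≤
      ((q ^ 2 + q + 1 : ℕ) : ℝ) ^ ((3 : ℝ) / 2) / (A.card : ℝ) := by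
  -- every point lies on exactly q+1 lines
  have hr : ∀ p : P, (L.filter (fun ℓ => p ∈ ℓ)).card = q + 1 := by
    intro p
    obtain ⟨ℓ₀, hℓ₀, hpℓ₀⟩ := exists_line_avoid h1 h4 p
    exact lines_through_card h1 h2 h3 hℓ₀ hpℓ₀
  -- a point exists
  obtain ⟨s, hs4, -⟩ := h4
  have hsne : s.Nonempty := Finset.card_pos.mp (by omega)
  obtain ⟨p₀, -⟩ := hsne
  have hP : Fintype.card P = q ^ 2 + q + 1 := card_points h1 h3 hr p₀
  have hL : L.card = q ^ 2 + q + 1 := card_lines h3 hr hP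
  have hS1 : ∑ ℓ ∈ L, (ℓ ∩ A).card = A.card * (q + 1) := sum_inter_card hr
  have hS2 : ∑ ℓ ∈ L, (ℓ ∩ A).card ^ 2 = A.card * (q + A.card) := sum_inter_card_sq h1 hr
  -- move to the reals
  set D := L.filter (fun ℓ => ℓ ∩ A = ∅) with hD
  set nq : ℝ := (q : ℝ) ^ 2 + (q : ℝ) + 1 with hnq
  set aR : ℝ := (A.card : ℝ) with haRdef
  set qR : ℝ := (q : ℝ) with hqRdef
  have haR1 : 1 ≤ aR := by
    have := Finset.card_pos.mpr hA
    simp only [haRdef]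
    exact_mod_cast this
  have haRpos : 0 < aR := lt_of_lt_of_le one_pos haR1
  have hqR2 : 2 ≤ qR := by simp only [hqRdef]; exact_mod_cast hq
  have hnqpos : 0 < nq := by nlinarith
  have key1 : ∑ ℓ ∈ L, ((ℓ ∩ A).card : ℝ) = aR * (qR + 1) := by
    rw [← Nat.cast_sum, hS1]; push_cast; ring
  have key2 : ∑ ℓ ∈ L, ((ℓ ∩ A).card : ℝ) ^ 2 = aR * (qR + aR) := by
    have : ∑ ℓ ∈ L, ((ℓ ∩ A).card : ℝ) ^ 2 = ((∑ ℓ ∈ L, (ℓ ∩ A).card ^ 2 : ℕ) : ℝ) := by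
      push_cast; rfl
    rw [this, hS2]; push_cast; ring
  have keyL : (L.card : ℝ) = nq := by rw [hL]; push_cast; ring
  -- expand the sum of squared deviations
  have expand : ∑ ℓ ∈ L, (nq * ((ℓ ∩ A).card : ℝ) - aR * (qR + 1)) ^ 2
      = nq ^ 2 * (aR * (qR + aR)) - nq * (aR * (qR + 1)) ^ 2 := by
    have hterm : ∀ ℓ ∈ L, (nq * ((ℓ ∩ A).card : ℝ) - aR * (qR + 1)) ^ 2
        = nq ^ 2 * ((ℓ ∩ A).card : ℝ) ^ 2
          - (2 * nq * (aR * (qR + 1))) * ((ℓ ∩ A).card : ℝ) + (aR * (qR + 1)) ^ 2 := by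
      intro ℓ _; ring
    rw [Finset.sum_congr rfl hterm, Finset.sum_add_distrib, Finset.sum_sub_distrib,
      ← Finset.mul_sum, ← Finset.mul_sum, key1, key2, Finset.sum_const, nsmul_eq_mul, keyL]
    ring
  -- lines missing A contribute (aR (qR+1))^2 each
  have lower : (D.card : ℝ) * (aR * (qR + 1)) ^ 2
      ≤ ∑ ℓ ∈ L, (nq * ((ℓ ∩ A).card : ℝ) - aR * (qR + 1)) ^ 2 := by
    have hsub : D ⊆ L := Finset.filter_subset _ _
    calc (D.card : ℝ) * (aR * (qR + 1)) ^ 2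
        = ∑ _ℓ ∈ D, (aR * (qR + 1)) ^ 2 := by rw [Finset.sum_const, nsmul_eq_mul]
      _ = ∑ ℓ ∈ D, (nq * ((ℓ ∩ A).card : ℝ) - aR * (qR + 1)) ^ 2 := by
          refine Finset.sum_congr rfl (fun ℓ hℓ => ?_)
          have hempty : ℓ ∩ A = ∅ := (Finset.mem_filter.mp hℓ).2
          rw [hempty]
          simp
      _ ≤ ∑ ℓ ∈ L, (nq * ((ℓ ∩ A).card : ℝ) - aR * (qR + 1)) ^ 2 :=
          Finset.sum_le_sum_of_subset_of_nonneg hsub (fun ℓ _ _ => sq_nonneg _)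
  rw [expand] at lower
  -- simplify using (qR+1)^2 ≥ nq
  have hq1sq : nq ≤ (qR + 1) ^ 2 := by nlinarith
  have hstep : nq ^ 2 * (aR * (qR + aR)) - nq * (aR * (qR + 1)) ^ 2 ≤ nq ^ 2 * aR * qR := by
    nlinarith [mul_nonneg (mul_nonneg hnqpos.le (sq_nonneg aR)) (sub_nonneg.mpr hq1sq)]
  have key3 : (D.card : ℝ) * (aR * (qR + 1)) ^ 2 ≤ nq ^ 2 * aR * qR := le_trans lower hstep
  -- sqrt facts
  have hsnn : 0 ≤ Real.sqrt nq := Real.sqrt_nonneg _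
  have hs : Real.sqrt nq * Real.sqrt nq = nq := Real.mul_self_sqrt hnqpos.le
  have hsle : Real.sqrt nq ≤ qR + 1 := by
    have := Real.sqrt_le_sqrt hq1sq
    rwa [Real.sqrt_sq (by linarith : (0:ℝ) ≤ qR + 1)] at this
  have h5 : qR * Real.sqrt nq ≤ (qR + 1) ^ 2 := by nlinarith
  have h6 : nq ^ 2 * aR * qR ≤ nq * Real.sqrt nq * aR * (qR + 1) ^ 2 := by
    have hpos6 : (0:ℝ) ≤ nq * Real.sqrt nq * aR :=
      mul_nonneg (mul_nonneg hnqpos.le hsnn) haRpos.le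
    have h7 := mul_le_mul_of_nonneg_left h5 hpos6
    have h8 : nq * Real.sqrt nq * aR * (qR * Real.sqrt nq)
        = nq * (Real.sqrt nq * Real.sqrt nq) * aR * qR := by ring
    rw [h8, hs] at h7
    calc nq ^ 2 * aR * qR = nq * nq * aR * qR := by ring
      _ ≤ nq * Real.sqrt nq * aR * (qR + 1) ^ 2 := h7
  have key4 : (D.card : ℝ) * aR ≤ nq * Real.sqrt nq := by
    have hcomb : (D.card : ℝ) * aR * (aR * (qR + 1) ^ 2)
        ≤ nq * Real.sqrt nq * (aR * (qR + 1) ^ 2) := by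
      calc (D.card : ℝ) * aR * (aR * (qR + 1) ^ 2)
          = (D.card : ℝ) * (aR * (qR + 1)) ^ 2 := by ring
        _ ≤ nq ^ 2 * aR * qR := key3
        _ ≤ nq * Real.sqrt nq * aR * (qR + 1) ^ 2 := h6
        _ = nq * Real.sqrt nq * (aR * (qR + 1) ^ 2) := by ring
    have hposf : (0:ℝ) < aR * (qR + 1) ^ 2 := by nlinarith
    exact le_of_mul_le_mul_right hcomb hposf
  -- finish
  have hcast : ((q ^ 2 + q + 1 : ℕ) : ℝ) = nq := by push_cast; ring
  have hrpow : nq ^ ((3:ℝ) / 2) = nq * Real.sqrt nq := by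
    rw [show (3:ℝ)/2 = 1 + 1/2 by norm_num, Real.rpow_add hnqpos, Real.rpow_one,
      Real.sqrt_eq_rpow]
  rw [hcast, hrpow, le_div_iff₀ haRpos]
  exact key4
end

section
/- Let (P, L) be a finite projective plane of order q with n = q^2 + q + 1, and let A ⊆ P be nonempty. Then the number of lines meeting A, |N(A)| where N(A) = {ℓ ∈ L : ℓ ∩ A ≠ ∅}, satisfies |N(A)| ≥ (q+1)^2 |A| / (|A| + q). -/
open Finset

lemma pencil_card (q : ℕ)
    (P : Type) [Fintype P] [DecidableEq P]
    (L : Finset (Finset P))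
    (h1 : ∀ p₁ p₂ : P, p₁ ≠ p₂ → ∃! ℓ, ℓ ∈ L ∧ p₁ ∈ ℓ ∧ p₂ ∈ ℓ)
    (h2 : ∀ ℓ₁ ∈ L, ∀ ℓ₂ ∈ L, ℓ₁ ≠ ℓ₂ → ∃! p : P, p ∈ ℓ₁ ∧ p ∈ ℓ₂)
    (h3 : ∀ ℓ ∈ L, ℓ.card = q + 1)
    (h4 : ∃ s : Finset P, s.card = 4 ∧ ∀ ℓ ∈ L, (s ∩ ℓ).card ≤ 2)
    (p : P) : (L.filter (fun ℓ => p ∈ ℓ)).card = q + 1 := by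
  obtain ⟨s, hs4, hs2⟩ := h4
  -- there is a line not through p
  have hex : ∃ ℓ₀, ℓ₀ ∈ L ∧ p ∉ ℓ₀ := by
    have hcard : 2 < (s.erase p).card := by
      have := Finset.pred_card_le_card_erase (a := p) (s := s)
      omega
    obtain ⟨x, y, z, hx, hy, hz, hxy, hxz, hyz⟩ := Finset.two_lt_card_iff.mp hcard
    have hpx : p ≠ x := fun h => (Finset.mem_erase.mp hx).1 h.symm
    have hpy : p ≠ y := fun h => (Finset.mem_erase.mp hy).1 h.symm
    have hpz : p ≠ z := fun h => (Finset.mem_erase.mp hz).1 h.symm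
    have hxs : x ∈ s := (Finset.mem_erase.mp hx).2
    have hys : y ∈ s := (Finset.mem_erase.mp hy).2
    have hzs : z ∈ s := (Finset.mem_erase.mp hz).2
    obtain ⟨l1, ⟨hl1L, hxl1, hyl1⟩, hu1⟩ := h1 x y hxy
    obtain ⟨l2, ⟨hl2L, hxl2, hzl2⟩, hu2⟩ := h1 x z hxz
    by_cases hp1 : p ∈ l1
    · by_cases hp2 : p ∈ l2
      · exfalso
        obtain ⟨l3, ⟨hl3L, hpl3, hxl3⟩, hu3⟩ := h1 p x hpx
        have e1 : l1 = l3 := hu3 l1 ⟨hl1L, hp1, hxl1⟩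
        have e2 : l2 = l3 := hu3 l2 ⟨hl2L, hp2, hxl2⟩
        have hsub : ({x, y, z} : Finset P) ⊆ s ∩ l1 := by
          intro a ha
          simp only [Finset.mem_insert, Finset.mem_singleton] at ha
          rcases ha with rfl | rfl | rfl
          · exact Finset.mem_inter.mpr ⟨hxs, hxl1⟩
          · exact Finset.mem_inter.mpr ⟨hys, hyl1⟩
          · exact Finset.mem_inter.mpr ⟨hzs, by rw [e1, ← e2] at *; exact hzl2⟩
        have : ({x, y, z} : Finset P).card = 3 := by
          rw [Finset.card_insert_of_notMem (by simp [hxy, hxz]),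
            Finset.card_insert_of_notMem (by simp [hyz]), Finset.card_singleton]
        have := Finset.card_le_card hsub
        have := hs2 l1 hl1L
        omega
      · exact ⟨l2, hl2L, hp2⟩
    · exact ⟨l1, hl1L, hp1⟩
  obtain ⟨ℓ₀, hℓ₀L, hpℓ₀⟩ := hex
  have key : (L.filter (fun ℓ => p ∈ ℓ)).card = ℓ₀.card := by
    have hne : ∀ m ∈ L.filter (fun ℓ => p ∈ ℓ), m ≠ ℓ₀ := by
      intro m hm h
      rw [Finset.mem_filter] at hm
      exact hpℓ₀ (h ▸ hm.2)
    apply Finset.card_bij (fun m hm =>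
      (h2 m (Finset.mem_filter.mp hm).1 ℓ₀ hℓ₀L (hne m hm)).choose)
    · intro m hm
      exact (h2 m (Finset.mem_filter.mp hm).1 ℓ₀ hℓ₀L (hne m hm)).choose_spec.1.2
    · intro m₁ hm₁ m₂ hm₂ heq
      obtain ⟨hm₁L, hpm₁⟩ := Finset.mem_filter.mp hm₁
      obtain ⟨hm₂L, hpm₂⟩ := Finset.mem_filter.mp hm₂
      set x := (h2 m₁ hm₁L ℓ₀ hℓ₀L (hne m₁ hm₁)).choose with hxdef
      have hx1 := (h2 m₁ hm₁L ℓ₀ hℓ₀L (hne m₁ hm₁)).choose_spec.1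
      have hx2 := (h2 m₂ hm₂L ℓ₀ hℓ₀L (hne m₂ hm₂)).choose_spec.1
      rw [← heq] at hx2
      have hpx : p ≠ x := fun h => hpℓ₀ (h ▸ hx1.2)
      obtain ⟨l3, hl3, hu3⟩ := h1 p x hpx
      rw [hu3 m₁ ⟨hm₁L, hpm₁, hx1.1⟩, hu3 m₂ ⟨hm₂L, hpm₂, hx2.1⟩]
    · intro x hx
      have hpx : p ≠ x := fun h => hpℓ₀ (h ▸ hx)
      obtain ⟨m, ⟨hmL, hpm, hxm⟩, hum⟩ := h1 p x hpx
      have hm' : m ∈ L.filter (fun ℓ => p ∈ ℓ) := Finset.mem_filter.mpr ⟨hmL, hpm⟩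
      refine ⟨m, hm', ?_⟩
      have hc := (h2 m hmL ℓ₀ hℓ₀L (hne m hm')).choose_spec
      exact (hc.2 x ⟨hxm, hx⟩).symm
  rw [key, h3 ℓ₀ hℓ₀L]

theorem projective_plane_tanner_bound
    (q : ℕ) (hq : 2 ≤ q)
    (P : Type) [Fintype P] [DecidableEq P]
    (L : Finset (Finset P))
    (h1 : ∀ p₁ p₂ : P, p₁ ≠ p₂ → ∃! ℓ, ℓ ∈ L ∧ p₁ ∈ ℓ ∧ p₂ ∈ ℓ)
    (h2 : ∀ ℓ₁ ∈ L, ∀ ℓ₂ ∈ L, ℓ₁ ≠ ℓ₂ → ∃! p : P, p ∈ ℓ₁ ∧ p ∈ ℓ₂)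
    (h3 : ∀ ℓ ∈ L, ℓ.card = q + 1)
    (h4 : ∃ s : Finset P, s.card = 4 ∧ ∀ ℓ ∈ L, (s ∩ ℓ).card ≤ 2)
    (A : Finset P) (hA : A.Nonempty) :
    ((L.filter (fun ℓ => (ℓ ∩ A).Nonempty)).card : ℝ) ≥
      ((q : ℝ) + 1) ^ 2 * (A.card : ℝ) / ((A.card : ℝ) + (q : ℝ)) := by
  classical
  set N := L.filter (fun ℓ => (ℓ ∩ A).Nonempty) with hN
  set a := A.card with ha
  have ha1 : 1 ≤ a := Finset.card_pos.mpr hA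
  -- degree sum
  have hdeg : ∀ p : P, (L.filter (fun ℓ => p ∈ ℓ)).card = q + 1 :=
    pencil_card q P L h1 h2 h3 h4
  have inter_eq : ∀ ℓ : Finset P, ℓ ∩ A = A.filter (fun p => p ∈ ℓ) := by
    intro ℓ; ext p; simp [and_comm]
  -- Claim 1 : sum over N of |ℓ ∩ A| = (q+1) * a
  have S1 : ∑ ℓ ∈ N, (ℓ ∩ A).card = (q + 1) * a := by
    have e1 : ∑ ℓ ∈ N, (ℓ ∩ A).card = ∑ ℓ ∈ L, (ℓ ∩ A).card := by
      rw [hN]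
      apply Finset.sum_filter_of_ne
      intro ℓ _ h
      exact Finset.card_pos.mp (Nat.pos_of_ne_zero h)
    rw [e1]
    calc ∑ ℓ ∈ L, (ℓ ∩ A).card
        = ∑ ℓ ∈ L, ∑ p ∈ A, (if p ∈ ℓ then 1 else 0) := by
          refine Finset.sum_congr rfl fun ℓ _ => ?_
          rw [inter_eq, Finset.card_filter]
      _ = ∑ p ∈ A, ∑ ℓ ∈ L, (if p ∈ ℓ then 1 else 0) := Finset.sum_comm
      _ = ∑ p ∈ A, (q + 1) := by
          refine Finset.sum_congr rfl fun p _ => ?_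
          rw [← Finset.card_filter]
          exact hdeg p
      _ = (q + 1) * a := by rw [Finset.sum_const, smul_eq_mul, mul_comm]
  -- Claim 2 : sum of offDiag cards over L
  have S2 : ∑ ℓ ∈ L, (ℓ ∩ A).offDiag.card = a * a - a := by
    calc ∑ ℓ ∈ L, (ℓ ∩ A).offDiag.card
        = ∑ ℓ ∈ L, ∑ pq ∈ A.offDiag, (if pq.1 ∈ ℓ ∧ pq.2 ∈ ℓ then 1 else 0) := by
          refine Finset.sum_congr rfl fun ℓ _ => ?_
          have : (ℓ ∩ A).offDiag = A.offDiag.filter (fun pq => pq.1 ∈ ℓ ∧ pq.2 ∈ ℓ) := by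
            ext pq
            simp only [Finset.mem_offDiag, Finset.mem_filter, Finset.mem_inter]
            tauto
          rw [this, Finset.card_filter]
      _ = ∑ pq ∈ A.offDiag, ∑ ℓ ∈ L, (if pq.1 ∈ ℓ ∧ pq.2 ∈ ℓ then 1 else 0) :=
          Finset.sum_comm
      _ = ∑ pq ∈ A.offDiag, 1 := by
          refine Finset.sum_congr rfl fun pq hpq => ?_
          rw [← Finset.card_filter]
          obtain ⟨-, -, hne⟩ := Finset.mem_offDiag.mp hpq
          obtain ⟨ℓ, ⟨hℓL, hp1, hp2⟩, hu⟩ := h1 pq.1 pq.2 hne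
          rw [Finset.card_eq_one]
          refine ⟨ℓ, ?_⟩
          ext m
          simp only [Finset.mem_filter, Finset.mem_singleton]
          constructor
          · rintro ⟨hmL, hm1, hm2⟩; exact hu m ⟨hmL, hm1, hm2⟩
          · rintro rfl; exact ⟨hℓL, hp1, hp2⟩
      _ = A.offDiag.card := by rw [Finset.sum_const, smul_eq_mul, mul_one]
      _ = a * a - a := Finset.offDiag_card A
  -- sum of squares bound
  have Ssq : ∑ ℓ ∈ N, (ℓ ∩ A).card ^ 2 ≤ a * (a + q) := by
    have hsplit : ∀ ℓ : Finset P, (ℓ ∩ A).card ^ 2 = (ℓ ∩ A).offDiag.card + (ℓ ∩ A).card := by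
      intro ℓ
      rw [Finset.offDiag_card]
      have h : (ℓ ∩ A).card ≤ (ℓ ∩ A).card * (ℓ ∩ A).card := by nlinarith
      rw [pow_two]
      omega
    have e2 : ∑ ℓ ∈ N, (ℓ ∩ A).offDiag.card ≤ a * a - a := by
      rw [← S2]
      exact Finset.sum_le_sum_of_subset (Finset.filter_subset _ _)
    calc ∑ ℓ ∈ N, (ℓ ∩ A).card ^ 2
        = ∑ ℓ ∈ N, (ℓ ∩ A).offDiag.card + ∑ ℓ ∈ N, (ℓ ∩ A).card := by
          rw [← Finset.sum_add_distrib]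
          exact Finset.sum_congr rfl fun ℓ _ => hsplit ℓ
      _ ≤ (a * a - a) + (q + 1) * a := by rw [S1]; omega
      _ ≤ a * (a + q) := by
          have haa : a ≤ a * a := Nat.le_mul_of_pos_left a (by omega)
          zify [haa]
          nlinarith
  -- Cauchy-Schwarz over the reals
  have CS : ((∑ ℓ ∈ N, ((ℓ ∩ A).card : ℝ)) ^ 2) ≤ (N.card : ℝ) * ∑ ℓ ∈ N, ((ℓ ∩ A).card : ℝ) ^ 2 :=
    sq_sum_le_card_mul_sum_sq
  have hS1R : (∑ ℓ ∈ N, ((ℓ ∩ A).card : ℝ)) = ((q : ℝ) + 1) * (a : ℝ) := by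
    rw [← Nat.cast_sum, S1]; push_cast; ring
  have hSsqR : (∑ ℓ ∈ N, ((ℓ ∩ A).card : ℝ) ^ 2) ≤ (a : ℝ) * ((a : ℝ) + (q : ℝ)) := by
    have := (Nat.cast_le (α := ℝ)).mpr Ssq
    push_cast at this ⊢
    convert this using 2
  have key : (((q : ℝ) + 1) * (a : ℝ)) ^ 2 ≤ (N.card : ℝ) * ((a : ℝ) * ((a : ℝ) + (q : ℝ))) := by
    rw [← hS1R]
    refine CS.trans ?_
    have hm : (0 : ℝ) ≤ (N.card : ℝ) := Nat.cast_nonneg _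
    exact mul_le_mul_of_nonneg_left hSsqR hm
  have haR : (1 : ℝ) ≤ (a : ℝ) := by exact_mod_cast ha1
  have hqR : (0 : ℝ) ≤ (q : ℝ) := Nat.cast_nonneg _
  have hden : (0 : ℝ) < (a : ℝ) + (q : ℝ) := by linarith
  rw [ge_iff_le, div_le_iff₀ hden]
  nlinarith [key, Nat.cast_nonneg (α := ℝ) N.card]
end

section
/- Let Δ be the full d-simplex, i.e., the simplicial complex on vertex set {1,...,d+1} containing all nonempty subsets as faces. Then there is a sequence of elementary 2-collapses reducing Δ to its 0-skeleton (the complex consisting of the d+1 vertices only). -/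
/-!
Collapse the edges `{a, b}`, `a < b`, one at a time in lexicographic order of `(a, b)`. When
`{a, b}` is the first edge still present, a remaining face containing `a` and `b` contains no
`z < a` (the edge `{z, b}` is gone) and no `a < z < b` (the edge `{a, z}` is gone), so it lies in
`{a} ∪ {y | b ≤ y}`, which is itself a remaining face. So the faces containing `{a, b}` have a
largest element and a single elementary 2-collapse removes all of them. When no edge is left,
only the vertices remain.
-/

/-- `K'` arises from `K` by an elementary `d`-collapse at faces `σ ⊆ τ`:
`dim σ ≤ d - 1` (i.e. `σ.card ≤ d`), `τ` is inclusion-maximal in `K`, and `τ` is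
the unique inclusion-maximal face of `K` containing `σ` (equivalently, every face
of `K` containing `σ` is contained in `τ`); the collapse removes all faces `η`
with `σ ⊆ η ⊆ τ`. -/
def ElemCollapse {V : Type*} [DecidableEq V] (d : ℕ)
    (K K' : Finset (Finset V)) : Prop :=
  ∃ σ ∈ K, ∃ τ ∈ K, σ ⊆ τ ∧ σ.card ≤ d ∧
    (∀ η ∈ K, τ ⊆ η → η = τ) ∧
    (∀ η ∈ K, σ ⊆ η → η ⊆ τ) ∧
    K' = K.filter (fun η => ¬ (σ ⊆ η ∧ η ⊆ τ))

open Finset Relation Prod.Lex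

theorem elemCollapse_filter_not_superset {V : Type*} [DecidableEq V] {d : ℕ}
    {K : Finset (Finset V)} {σ τ : Finset V} (hσ : σ ∈ K) (hτ : τ ∈ K) (hστ : σ ⊆ τ)
    (hcard : σ.card ≤ d) (hstar : ∀ η ∈ K, σ ⊆ η → η ⊆ τ) :
    ElemCollapse d K (K.filter fun η => ¬ σ ⊆ η) := by
  refine ⟨σ, hσ, τ, hτ, hστ, hcard, fun η hη hτη => ?_, hstar, ?_⟩
  · exact (hstar η hη (hστ.trans hτη)).antisymm hτη
  · exact filter_congr fun η hη => not_congr (and_iff_left_of_imp (hstar η hη)).symm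

section LinearOrder

variable {V : Type*} [LinearOrder V] [Fintype V]

def lexEdges : Finset (V ×ₗ V) := univ.filter fun e => (ofLex e).1 < (ofLex e).2

/-- The edge `{x, y}`, `x < y`, is encoded as `toLex (x, y)`, so that edges are ordered
lexicographically. -/
def facesAvoiding (S : Finset (V ×ₗ V)) : Finset (Finset V) :=
  univ.powerset.filter fun η => η.Nonempty ∧ ∀ x ∈ η, ∀ y ∈ η, x < y → toLex (x, y) ∉ S

lemma mem_facesAvoiding {S : Finset (V ×ₗ V)} {η : Finset V} :
    η ∈ facesAvoiding S ↔ η.Nonempty ∧ ∀ x ∈ η, ∀ y ∈ η, x < y → toLex (x, y) ∉ S := by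
  simp [facesAvoiding]

lemma facesAvoiding_empty :
    facesAvoiding (∅ : Finset (V ×ₗ V)) =
      univ.powerset.filter fun σ => σ.Nonempty := by
  ext η
  simp [mem_facesAvoiding]

lemma facesAvoiding_lexEdges :
    facesAvoiding (lexEdges : Finset (V ×ₗ V)) =
      univ.powerset.filter fun σ => σ.card = 1 := by
  ext η
  simp only [mem_facesAvoiding, lexEdges, mem_filter, mem_univ, true_and, mem_powerset,
    subset_univ, ofLex_toLex, imp_not_self]
  constructor
  · rintro ⟨hne, h⟩
    refine le_antisymm (card_le_one.2 fun x hx y hy => ?_) (one_le_card.2 hne)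
    exact le_antisymm (not_lt.1 (h y hy x hx)) (not_lt.1 (h x hx y hy))
  · intro h
    refine ⟨one_le_card.1 h.ge, fun x hx y hy => (card_le_one.1 h.le y hy x hx).not_gt⟩

lemma facesAvoiding_insert {S : Finset (V ×ₗ V)} {a b : V} (hab : a < b) :
    facesAvoiding (insert (toLex (a, b)) S) =
      (facesAvoiding S).filter fun η => ¬ {a, b} ⊆ η := by
  ext η
  simp only [mem_filter, mem_facesAvoiding, mem_insert, toLex_inj, Prod.mk.injEq,
    insert_subset_iff, singleton_subset_iff, not_or]
  constructor
  · rintro ⟨hne, h⟩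
    exact ⟨⟨hne, fun x hx y hy hxy => (h x hx y hy hxy).2⟩,
      fun ⟨ha, hb⟩ => (h a ha b hb hab).1 ⟨rfl, rfl⟩⟩
  · rintro ⟨⟨hne, h⟩, hab'⟩
    refine ⟨hne, fun x hx y hy hxy => ⟨?_, h x hx y hy hxy⟩⟩
    rintro ⟨rfl, rfl⟩
    exact hab' ⟨hx, hy⟩

lemma mem_facesAvoiding_of_subset {S : Finset (V ×ₗ V)} {η θ : Finset V}
    (hη : η ∈ facesAvoiding S) (hθη : θ ⊆ η) (hθ : θ.Nonempty) : θ ∈ facesAvoiding S := by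
  rw [mem_facesAvoiding] at hη ⊢
  exact ⟨hθ, fun x hx y hy => hη.2 x (hθη hx) y (hθη hy)⟩

lemma insert_filter_le_mem_facesAvoiding {S : Finset (V ×ₗ V)} {a b : V} (hab : a < b)
    (hS : ∀ e ∈ S, e < toLex (a, b)) : insert a (univ.filter (b ≤ ·)) ∈ facesAvoiding S := by
  refine mem_facesAvoiding.2 ⟨insert_nonempty _ _, fun x hx y hy hxy hxyS => ?_⟩
  have hle : toLex (a, b) ≤ toLex (x, y) := by
    simp only [mem_insert, mem_filter, mem_univ, true_and] at hx hy
    rw [toLex_le_toLex]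
    rcases hx with rfl | hbx
    · exact Or.inr ⟨rfl, hy.resolve_left hxy.ne'⟩
    · exact Or.inl (hab.trans_le hbx)
  exact (hS _ hxyS).not_ge hle

lemma subset_of_mem_facesAvoiding {S : Finset (V ×ₗ V)} {a b : V}
    (hlow : ∀ x y, x < y → toLex (x, y) < toLex (a, b) → toLex (x, y) ∈ S)
    {η : Finset V} (hη : η ∈ facesAvoiding S) (ha : a ∈ η) (hb : b ∈ η) :
    η ⊆ insert a (univ.filter (b ≤ ·)) := by
  intro z hz
  simp only [mem_insert, mem_filter, mem_univ, true_and]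
  by_contra! ⟨hza, hzb⟩
  have hη' := (mem_facesAvoiding.1 hη).2
  rcases hza.lt_or_gt with hza | haz
  · exact hη' z hz b hb hzb (hlow z b hzb (toLex_lt_toLex.2 (Or.inl hza)))
  · exact hη' a ha z hz haz (hlow a z haz (toLex_lt_toLex.2 (Or.inr ⟨rfl, hzb⟩)))

lemma elemCollapse_facesAvoiding_insert {S : Finset (V ×ₗ V)} {a b : V} (hab : a < b)
    (hS : ∀ e ∈ S, e < toLex (a, b))
    (hlow : ∀ x y, x < y → toLex (x, y) < toLex (a, b) → toLex (x, y) ∈ S) :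
    ElemCollapse 2 (facesAvoiding S) (facesAvoiding (insert (toLex (a, b)) S)) := by
  have hτ := insert_filter_le_mem_facesAvoiding hab hS
  have hστ : {a, b} ⊆ insert a (univ.filter (b ≤ ·)) := by
    simp [insert_subset_iff]
  rw [facesAvoiding_insert hab]
  have hσ := mem_facesAvoiding_of_subset hτ hστ (insert_nonempty _ _)
  refine elemCollapse_filter_not_superset hσ hτ hστ card_le_two fun η hη hση => ?_
  exact subset_of_mem_facesAvoiding hlow hη (hση (mem_insert_self _ _))
    (hση (mem_insert_of_mem (mem_singleton_self _)))

lemma reflTransGen_facesAvoiding {S : Finset (V ×ₗ V)} (hS : S ⊆ lexEdges)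
    (hlow : ∀ e ∈ S, ∀ e' ∈ lexEdges, e' < e → e' ∈ S) :
    ReflTransGen (ElemCollapse 2) (facesAvoiding ∅) (facesAvoiding S) := by
  induction S using Finset.induction_on_max with
  | empty => rfl
  | insert e s hlt ih =>
    obtain ⟨⟨a, b⟩, rfl⟩ := toLex.surjective e
    have hab : a < b := by simpa [lexEdges] using hS (mem_insert_self _ _)
    refine (ih ((subset_insert _ _).trans hS) fun e he e' he' he'e => ?_).tail
      (elemCollapse_facesAvoiding_insert hab hlt fun x y hxy hlt' => ?_)
    · exact (mem_insert.1 (hlow e (mem_insert_of_mem he) e' he' he'e)).resolve_left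
        (he'e.trans (hlt e he)).ne
    · have hxy' : toLex (x, y) ∈ lexEdges := by simpa [lexEdges]
      exact (mem_insert.1 (hlow _ (mem_insert_self _ _) _ hxy' hlt')).resolve_left hlt'.ne

theorem simplex_collapses_to_vertices :
    ReflTransGen (ElemCollapse 2) ((univ : Finset V).powerset.filter fun σ => σ.Nonempty)
      ((univ : Finset V).powerset.filter fun σ => σ.card = 1) := by
  rw [← facesAvoiding_empty, ← facesAvoiding_lexEdges]
  exact reflTransGen_facesAvoiding Subset.rfl fun _ _ _ he' _ => he'

end LinearOrder

theorem simplex_two_collapses_to_skeleton (d : ℕ) :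
    Relation.ReflTransGen (ElemCollapse 2)
      ((Finset.univ : Finset (Fin (d + 1))).powerset.filter (fun σ => σ.Nonempty))
      ((Finset.univ : Finset (Fin (d + 1))).powerset.filter (fun σ => σ.card = 1)) :=
  simplex_collapses_to_vertices
end

section
/- Let (P, L) be a finite projective plane of order q and let K_q be the simplicial complex with vertex set P whose faces are the subsets of lines (i.e., σ ∈ K_q iff σ ⊆ ℓ for some ℓ ∈ L). Then K_q is 2-collapsible: there is a sequence of elementary 2-collapses reducing K_q to the empty complex. -/
section Aux

variable {P : Type} [Fintype P] [DecidableEq P]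

/-- `(a, b)` are the two elements of `η` of smallest `r`-rank. -/
def IsKey (r : P → ℕ) (η : Finset P) (a b : P) : Prop :=
  a ∈ η ∧ b ∈ η ∧ r a < r b ∧ ∀ c ∈ η, c = a ∨ r b ≤ r c

lemma key_exists (r : P → ℕ) (hinj : Function.Injective r) (η : Finset P)
    (h : 2 ≤ η.card) : ∃ a b, IsKey r η a b := by
  have hne : η.Nonempty := Finset.card_pos.mp (by omega)
  obtain ⟨a, ha, hamin⟩ := Finset.exists_min_image η r hne
  have hne2 : (η.erase a).Nonempty := by
    rw [← Finset.card_pos, Finset.card_erase_of_mem ha]; omega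
  obtain ⟨b, hb, hbmin⟩ := Finset.exists_min_image (η.erase a) r hne2
  have hba : b ≠ a := (Finset.mem_erase.mp hb).1
  refine ⟨a, b, ha, (Finset.mem_erase.mp hb).2, ?_, ?_⟩
  · rcases lt_or_eq_of_le (hamin b (Finset.mem_erase.mp hb).2) with h | h
    · exact h
    · exact absurd (hinj h) (Ne.symm hba)
  · intro c hc
    by_cases hca : c = a
    · exact Or.inl hca
    · exact Or.inr (hbmin c (Finset.mem_erase.mpr ⟨hca, hc⟩))

lemma key_unique (r : P → ℕ) (hinj : Function.Injective r) (η : Finset P)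
    {a b a' b' : P} (h : IsKey r η a b) (h' : IsKey r η a' b') : a = a' ∧ b = b' := by
  obtain ⟨ha, hb, hab, hall⟩ := h
  obtain ⟨ha', hb', hab', hall'⟩ := h'
  have haa : a = a' := by
    by_contra hne
    rcases hall a' ha' with h1 | h1
    · exact hne (h1.symm)
    · rcases hall' a ha with h2 | h2
      · exact hne h2
      · omega
  subst haa
  have : b = b' := by
    have hba : b ≠ a := fun h => by simp [h] at hab
    have hba' : b' ≠ a := fun h => by simp [h] at hab'
    rcases hall b' hb' with h1 | h1
    · exact absurd h1 hba'
    · rcases hall' b hb with h2 | h2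
      · exact absurd h2 hba
      · exact hinj (le_antisymm h1 h2)
  exact ⟨rfl, this⟩

/-- The state of the collapsing process at "time" `t`. -/
noncomputable def KState (L : Finset (Finset P)) (n : ℕ) (r : P → ℕ) (t : ℕ) :
    Finset (Finset P) :=
  @Finset.filter _ (fun η =>
    (η.card = 1 ∧ ∃ ℓ ∈ L, η ⊆ ℓ) ∨
    (2 ≤ η.card ∧ (∃ ℓ ∈ L, η ⊆ ℓ) ∧
      ∀ a b, IsKey r η a b → t ≤ n * r b + r a)) (Classical.decPred _) Finset.univ

lemma mem_KState {L : Finset (Finset P)} {n : ℕ} {r : P → ℕ} {t : ℕ} {η : Finset P} :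
    η ∈ KState L n r t ↔
    ((η.card = 1 ∧ ∃ ℓ ∈ L, η ⊆ ℓ) ∨
    (2 ≤ η.card ∧ (∃ ℓ ∈ L, η ⊆ ℓ) ∧
      ∀ a b, IsKey r η a b → t ≤ n * r b + r a)) := by
  simp [KState]

lemma nat_decomp {n x y b1 b2 : ℕ} (hx : x < n) (hy : y < n)
    (h : n * b1 + x = n * b2 + y) : b1 = b2 ∧ x = y := by
  have h1 : (n * b1 + x) % n = x := by
    simp [Nat.mul_add_mod, Nat.mod_eq_of_lt hx]
  have h2 : (n * b2 + y) % n = y := by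
    simp [Nat.mul_add_mod, Nat.mod_eq_of_lt hy]
  have hxy : x = y := by rw [← h1, ← h2, h]
  refine ⟨?_, hxy⟩
  have hmul : n * b1 = n * b2 := by omega
  exact Nat.eq_of_mul_eq_mul_left (by omega) hmul

lemma kstate_eq (L : Finset (Finset P)) (n : ℕ) (r : P → ℕ) (t : ℕ)
    (h : ∀ p q : P, r p < r q → t ≠ n * r q + r p) :
    KState L n r t = KState L n r (t + 1) := by
  apply Finset.ext
  intro η
  rw [mem_KState, mem_KState]
  constructor <;> rintro (h1 | ⟨hc, hl, hbd⟩)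
  · exact Or.inl h1
  · refine Or.inr ⟨hc, hl, fun a b hk => ?_⟩
    have := hbd a b hk
    have hne := h a b hk.2.2.1
    omega
  · exact Or.inl h1
  · exact Or.inr ⟨hc, hl, fun a b hk => le_trans (by omega) (hbd a b hk)⟩

lemma collapse_pair (L : Finset (Finset P))
    (hline : ∀ p₁ p₂ : P, p₁ ≠ p₂ → ∃! ℓ, ℓ ∈ L ∧ p₁ ∈ ℓ ∧ p₂ ∈ ℓ)
    (n : ℕ) (r : P → ℕ) (hinj : Function.Injective r) (hlt : ∀ p, r p < n)
    (a b : P) (hab : r a < r b) (t : ℕ) (ht : t = n * r b + r a) :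
    ElemCollapse 2 (KState L n r t) (KState L n r (t + 1)) := by
  have hab' : a ≠ b := fun h => by simp [h] at hab
  obtain ⟨ℓ, ⟨hℓL, haℓ, hbℓ⟩, huniq⟩ := hline a b hab'
  set σ : Finset P := {a, b} with hσdef
  set τ : Finset P := ℓ.filter (fun c => c = a ∨ r b ≤ r c) with hτdef
  have hσcard : σ.card = 2 := Finset.card_pair hab'
  have haτ : a ∈ τ := Finset.mem_filter.mpr ⟨haℓ, Or.inl rfl⟩
  have hbτ : b ∈ τ := Finset.mem_filter.mpr ⟨hbℓ, Or.inr le_rfl⟩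
  have hστ : σ ⊆ τ := by
    intro c hc
    rcases Finset.mem_insert.mp hc with h | h
    · exact h ▸ haτ
    · exact (Finset.mem_singleton.mp h) ▸ hbτ
  have hσℓ : σ ⊆ ℓ := by
    intro c hc
    rcases Finset.mem_insert.mp hc with h | h
    · exact h ▸ haℓ
    · exact (Finset.mem_singleton.mp h) ▸ hbℓ
  have hτℓ : τ ⊆ ℓ := Finset.filter_subset _ _
  have haσ : a ∈ σ := Finset.mem_insert_self _ _
  have hbσ : b ∈ σ := Finset.mem_insert_of_mem (Finset.mem_singleton_self _)
  have keyσ : IsKey r σ a b := by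
    refine ⟨haσ, hbσ, hab, fun c hc => ?_⟩
    rcases Finset.mem_insert.mp hc with h | h
    · exact Or.inl h
    · exact Or.inr (le_of_eq (congrArg r (Finset.mem_singleton.mp h)).symm)
  have keyτ : IsKey r τ a b :=
    ⟨haτ, hbτ, hab, fun c hc => (Finset.mem_filter.mp hc).2⟩
  -- membership of σ and τ in the state
  have hσK : σ ∈ KState L n r t := by
    rw [mem_KState]
    refine Or.inr ⟨by omega, ⟨ℓ, hℓL, hσℓ⟩, fun a' b' hk => ?_⟩
    obtain ⟨h1, h2⟩ := key_unique r hinj σ keyσ hk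
    rw [← h1, ← h2]
    omega
  have hτK : τ ∈ KState L n r t := by
    rw [mem_KState]
    have hcard : 2 ≤ τ.card := hσcard ▸ Finset.card_le_card hστ
    refine Or.inr ⟨hcard, ⟨ℓ, hℓL, hτℓ⟩, fun a' b' hk => ?_⟩
    obtain ⟨h1, h2⟩ := key_unique r hinj τ keyτ hk
    rw [← h1, ← h2]
    omega
  -- every face of size ≥ 2 containing a and b lies in ℓ
  have subline : ∀ η : Finset P, (∃ ℓ' ∈ L, η ⊆ ℓ') → a ∈ η → b ∈ η → η ⊆ ℓ := by
    rintro η ⟨ℓ', hℓ', hsub⟩ ha hb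
    have : ℓ' = ℓ := huniq ℓ' ⟨hℓ', hsub ha, hsub hb⟩
    exact this ▸ hsub
  -- key bound for faces containing a bad point
  have keybound : ∀ η : Finset P, a ∈ η →
      (∃ c ∈ η, c ≠ a ∧ r c < r b) →
      ∀ a' b', IsKey r η a' b' → n * r b' + r a' < t := by
    rintro η ha ⟨c, hc, hca, hcb⟩ a' b' ⟨ha', hb', hab'', hall⟩
    have hb'b : r b' < r b := by
      by_cases hc' : c = a'
      · subst hc'
        rcases hall a ha with h | h
        · exact absurd h.symm hca
        · omega
      · rcases hall c hc with h | h
        · exact absurd h hc'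
        · omega
    have h2 : n * r b' + n ≤ n * r b := by
      have h := Nat.mul_le_mul_left n (show r b' + 1 ≤ r b by omega)
      calc n * r b' + n = n * (r b' + 1) := by ring
        _ ≤ n * r b := h
    have := hlt a'
    omega
  -- the cone condition
  have cone : ∀ η ∈ KState L n r t, σ ⊆ η → η ⊆ τ := by
    intro η hη hσcall
    rw [mem_KState] at hη
    have haη : a ∈ η := hσcall haσ
    have hbη : b ∈ η := hσcall hbσ
    rcases hη with ⟨hc1, _⟩ | ⟨hc2, hl, hbd⟩
    · exfalso
      have := Finset.card_le_card hσcall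
      omega
    · have hηℓ : η ⊆ ℓ := subline η hl haη hbη
      by_contra hnot
      obtain ⟨c, hcη, hcτ⟩ := Finset.not_subset.mp hnot
      have hcℓ : c ∈ ℓ := hηℓ hcη
      have hcprop : c ≠ a ∧ r c < r b := by
        by_contra hcon
        push_neg at hcon
        apply hcτ
        rw [hτdef, Finset.mem_filter]
        refine ⟨hcℓ, ?_⟩
        by_cases h : c = a
        · exact Or.inl h
        · exact Or.inr (hcon h)
      obtain ⟨a', b', hk⟩ := key_exists r hinj η hc2
      have := hbd a' b' hk
      have := keybound η haη ⟨c, hcη, hcprop⟩ a' b' hk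
      omega
  refine ⟨σ, hσK, τ, hτK, hστ, by omega, ?_, cone, ?_⟩
  · -- maximality
    intro η hη hτη
    exact Finset.Subset.antisymm (cone η hη (hστ.trans hτη)) hτη
  · -- the filter equation
    apply Finset.ext
    intro η
    rw [Finset.mem_filter, mem_KState, mem_KState]
    constructor
    · rintro (h1 | ⟨hc, hl, hbd⟩)
      · refine ⟨Or.inl h1, ?_⟩
        rintro ⟨hσcall, _⟩
        have := Finset.card_le_card hσcall
        omega
      · refine ⟨Or.inr ⟨hc, hl, fun a' b' hk => le_trans (by omega) (hbd a' b' hk)⟩, ?_⟩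
        rintro ⟨hσcall, hτcall⟩
        have hk : IsKey r η a b :=
          ⟨hσcall haσ, hσcall hbσ, hab, fun c hc => (Finset.mem_filter.mp (hτcall hc)).2⟩
        have := hbd a b hk
        omega
    · rintro ⟨h1 | ⟨hc, hl, hbd⟩, hnot⟩
      · exact Or.inl h1
      · refine Or.inr ⟨hc, hl, fun a' b' hk => ?_⟩
        have hge := hbd a' b' hk
        rcases Nat.lt_or_ge t (n * r b' + r a') with h | h
        · omega
        · -- n * r b' + r a' = t, derive contradiction with hnot
          exfalso
          have heq : n * r b' + r a' = n * r b + r a := by omega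
          obtain ⟨hb'', ha''⟩ := nat_decomp (hlt a') (hlt a) heq
          have ha3 : a' = a := hinj ha''
          have hb3 : b' = b := hinj hb''
          subst ha3; subst hb3
          obtain ⟨ha', hb', _, hall⟩ := hk
          apply hnot
          constructor
          · intro c hc
            rcases Finset.mem_insert.mp hc with h | h
            · exact h ▸ ha'
            · exact (Finset.mem_singleton.mp h) ▸ hb'
          · have hηℓ : η ⊆ ℓ := subline η hl ha' hb'
            intro c hc
            exact Finset.mem_filter.mpr ⟨hηℓ hc, hall c hc⟩

lemma chain_collapse (L : Finset (Finset P))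
    (hline : ∀ p₁ p₂ : P, p₁ ≠ p₂ → ∃! ℓ, ℓ ∈ L ∧ p₁ ∈ ℓ ∧ p₂ ∈ ℓ)
    (n : ℕ) (r : P → ℕ) (hinj : Function.Injective r) (hlt : ∀ p, r p < n) :
    ∀ m t, Relation.ReflTransGen (ElemCollapse 2) (KState L n r t) (KState L n r (t + m)) := by
  intro m
  induction m with
  | zero => intro t; exact Relation.ReflTransGen.refl
  | succ k ih =>
    intro t
    have step : Relation.ReflTransGen (ElemCollapse 2)
        (KState L n r t) (KState L n r (t + 1)) := by
      by_cases hc : ∃ p q : P, r p < r q ∧ t = n * r q + r p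
      · obtain ⟨p, q, h1, h2⟩ := hc
        exact Relation.ReflTransGen.single (collapse_pair L hline n r hinj hlt p q h1 t h2)
      · push_neg at hc
        rw [kstate_eq L n r t (fun p q h => hc p q h)]
    have ih' := ih (t + 1)
    rw [show t + 1 + k = t + (k + 1) by omega] at ih'
    exact step.trans ih'

lemma singletons_collapse :
    ∀ K : Finset (Finset P), (∀ η ∈ K, η.card = 1) →
      Relation.ReflTransGen (ElemCollapse 2) K (∅ : Finset (Finset P)) := by
  intro K
  induction K using Finset.strongInduction with
  | _ K ih =>
    intro hall
    rcases K.eq_empty_or_nonempty with h | ⟨σ, hσ⟩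
    · exact h ▸ Relation.ReflTransGen.refl
    · have hcard := hall σ hσ
      have hstep : ElemCollapse 2 K (K.erase σ) := by
        refine ⟨σ, hσ, σ, hσ, Finset.Subset.refl σ, by omega, ?_, ?_, ?_⟩
        · intro η hη hsub
          exact (Finset.eq_of_subset_of_card_le hsub (by rw [hall η hη, hcard])).symm
        · intro η hη hsub
          have heq := Finset.eq_of_subset_of_card_le hsub (by rw [hall η hη, hcard])
          rw [← heq]
        · apply Finset.ext
          intro η
          rw [Finset.mem_erase, Finset.mem_filter]
          constructor
          · rintro ⟨hne, hη⟩
            refine ⟨hη, ?_⟩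
            rintro ⟨h1, h2⟩
            exact hne (Finset.Subset.antisymm h2 h1)
          · rintro ⟨hη, hnot⟩
            refine ⟨?_, hη⟩
            rintro rfl
            exact hnot ⟨Finset.Subset.refl _, Finset.Subset.refl _⟩
      have hsub : K.erase σ ⊂ K := Finset.erase_ssubset hσ
      have htail := ih (K.erase σ) hsub (fun η hη => hall η (Finset.mem_of_mem_erase hη))
      exact Relation.ReflTransGen.head hstep htail

end Aux

theorem projective_plane_complex_two_collapsible
    (q : ℕ) (hq : 2 ≤ q)
    (P : Type) [Fintype P] [DecidableEq P]
    (L : Finset (Finset P))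
    (h1 : ∀ p₁ p₂ : P, p₁ ≠ p₂ → ∃! ℓ, ℓ ∈ L ∧ p₁ ∈ ℓ ∧ p₂ ∈ ℓ)
    (h2 : ∀ ℓ₁ ∈ L, ∀ ℓ₂ ∈ L, ℓ₁ ≠ ℓ₂ → ∃! p : P, p ∈ ℓ₁ ∧ p ∈ ℓ₂)
    (h3 : ∀ ℓ ∈ L, ℓ.card = q + 1)
    (h4 : ∃ s : Finset P, s.card = 4 ∧ ∀ ℓ ∈ L, (s ∩ ℓ).card ≤ 2) :
    Relation.ReflTransGen (ElemCollapse 2)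
      ((Finset.univ : Finset (Finset P)).filter
        (fun σ => σ.Nonempty ∧ ∃ ℓ ∈ L, σ ⊆ ℓ))
      (∅ : Finset (Finset P)) := by
  classical
  set n := Fintype.card P with hn
  let e := Fintype.equivFin P
  set r : P → ℕ := fun p => (e p : ℕ) with hr
  have hinj : Function.Injective r := by
    intro p q h
    exact e.injective (Fin.ext h)
  have hlt : ∀ p, r p < n := fun p => (e p).isLt
  have h0 : (Finset.univ : Finset (Finset P)).filter
      (fun σ => σ.Nonempty ∧ ∃ ℓ ∈ L, σ ⊆ ℓ) = KState L n r 0 := by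
    apply Finset.ext
    intro η
    rw [Finset.mem_filter, mem_KState]
    constructor
    · rintro ⟨_, hne, hl⟩
      have hc : 1 ≤ η.card := Finset.card_pos.mpr hne
      rcases Nat.lt_or_ge η.card 2 with h | h
      · exact Or.inl ⟨by omega, hl⟩
      · exact Or.inr ⟨h, hl, fun a b _ => Nat.zero_le _⟩
    · rintro (⟨hc, hl⟩ | ⟨hc, hl, _⟩)
      · exact ⟨Finset.mem_univ _, Finset.card_pos.mp (by omega), hl⟩
      · exact ⟨Finset.mem_univ _, Finset.card_pos.mp (by omega), hl⟩
  rw [h0]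
  have hmid := chain_collapse L h1 n r hinj hlt (n * n) 0
  rw [zero_add] at hmid
  refine hmid.trans (singletons_collapse (KState L n r (n * n)) ?_)
  intro η hη
  rw [mem_KState] at hη
  rcases hη with ⟨hc, _⟩ | ⟨hc, _, hbd⟩
  · exact hc
  · exfalso
    obtain ⟨a, b, hk⟩ := key_exists r hinj η hc
    have hv := hbd a b hk
    have ha := hlt a
    have hb := hlt b
    have h2' : n * (r b + 1) ≤ n * n := Nat.mul_le_mul_left n (by omega)
    have h3' : n * r b + n = n * (r b + 1) := by ring
    omega
end

section
/- Let (P, L) be a finite projective plane of order q with n = q^2 + q + 1, let c > 0, and suppose P_1, ..., P_{d+1} ⊆ P are disjoint sets each of size at least c·n. If n ≥ (2(d+1)/c)^2, then the set L' of lines meeting every P_i satisfies |L'| ≥ |L|/2. -/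
/-!
Counting incidences with a point set `A` of size `k`, the numbers `xₗ = |ℓ ∩ A|` satisfy
`∑ xₗ = k (q + 1)` and `∑ xₗ² = k (k + q)`, since two points lie on exactly one line.
Cauchy–Schwarz over the lines meeting `A` then shows that at most `q n / k ≤ q / c` lines miss `A`
when `k ≥ c n`. A union bound over the `d + 1` parts leaves at most `(d + 1) q / c` bad lines, and
`(d + 1) q / c = t q / 2 ≤ (t² + q²) / 4 ≤ n / 2` for `t = 2 (d + 1) / c`.
-/

open Finset

theorem Finset.sq_sum_le_card_filter_ne_zero_mul_sum_sq {ι α : Type*} [Semiring α] [LinearOrder α]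
    [IsStrictOrderedRing α] [ExistsAddOfLE α] (s : Finset ι) (f : ι → α) :
    (∑ i ∈ s, f i) ^ 2 ≤ #{i ∈ s | f i ≠ 0} * ∑ i ∈ s, f i ^ 2 := by
  have hsq : ∑ i ∈ s with f i ≠ 0, f i ^ 2 = ∑ i ∈ s, f i ^ 2 :=
    sum_filter_of_ne fun _ _ h h0 ↦ by simp [h0] at h
  rw [← sum_filter_ne_zero, ← hsq]
  exact sq_sum_le_card_mul_sum_sq

theorem Finset.card_filter_exists_le_sum {ι α : Type*} [Fintype ι] (s : Finset α)
    (p : ι → α → Prop) [∀ i, DecidablePred (p i)] [DecidablePred fun x ↦ ∃ i, p i x] :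
    #{x ∈ s | ∃ i, p i x} ≤ ∑ i, #{x ∈ s | p i x} := by
  classical
  calc #{x ∈ s | ∃ i, p i x}
      ≤ #(univ.biUnion fun i ↦ {x ∈ s | p i x}) := card_le_card fun x hx ↦ by
        obtain ⟨hxs, i, hi⟩ := mem_filter.mp hx
        exact mem_biUnion.mpr ⟨i, mem_univ i, mem_filter.mpr ⟨hxs, hi⟩⟩
    _ ≤ ∑ i, #{x ∈ s | p i x} := card_biUnion_le

structure IsProjectivePlane {P : Type*} [DecidableEq P] (q : ℕ) (L : Finset (Finset P)) : Prop where
  existsUnique_line : ∀ p₁ p₂ : P, p₁ ≠ p₂ → ∃! ℓ, ℓ ∈ L ∧ p₁ ∈ ℓ ∧ p₂ ∈ ℓ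
  existsUnique_inter : ∀ ℓ₁ ∈ L, ∀ ℓ₂ ∈ L, ℓ₁ ≠ ℓ₂ → ∃! p : P, p ∈ ℓ₁ ∧ p ∈ ℓ₂
  card_line : ∀ ℓ ∈ L, ℓ.card = q + 1
  exists_quadrangle : ∃ s : Finset P, s.card = 4 ∧ ∀ ℓ ∈ L, (s ∩ ℓ).card ≤ 2

namespace IsProjectivePlane

variable {P : Type*} [DecidableEq P] {q : ℕ} {L : Finset (Finset P)} (hL : IsProjectivePlane q L)
include hL

theorem eq_of_mem_of_mem {a b : P} {ℓ ℓ' : Finset P} (hab : a ≠ b) (hℓ : ℓ ∈ L) (hℓ' : ℓ' ∈ L)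
    (ha : a ∈ ℓ) (hb : b ∈ ℓ) (ha' : a ∈ ℓ') (hb' : b ∈ ℓ') : ℓ = ℓ' :=
  (hL.existsUnique_line a b hab).unique ⟨hℓ, ha, hb⟩ ⟨hℓ', ha', hb'⟩

theorem card_filter_mem_mem {a b : P} (hab : a ≠ b) : #{ℓ ∈ L | a ∈ ℓ ∧ b ∈ ℓ} = 1 := by
  simpa [card_eq_one_iff_existsUnique] using hL.existsUnique_line a b hab

theorem card_inter_eq_one {ℓ ℓ' : Finset P} (hℓ : ℓ ∈ L) (hℓ' : ℓ' ∈ L) (hne : ℓ ≠ ℓ') :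
    #(ℓ ∩ ℓ') = 1 := by
  simpa [card_eq_one_iff_existsUnique] using hL.existsUnique_inter ℓ hℓ ℓ' hℓ' hne

theorem nonempty : L.Nonempty := by
  obtain ⟨s, hs, -⟩ := hL.exists_quadrangle
  obtain ⟨a, -, b, -, hab⟩ := one_lt_card.mp (by omega : 1 < #s)
  obtain ⟨ℓ, ⟨hℓ, -⟩, -⟩ := hL.existsUnique_line a b hab
  exact ⟨ℓ, hℓ⟩

/-- If every line passed through `p`, the line through `p` and a point `a` of the quadrangle
would contain the three quadrangle points other than `p`. -/
theorem exists_not_mem (p : P) : ∃ ℓ ∈ L, p ∉ ℓ := by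
  by_contra! hall
  obtain ⟨s, hs, hs2⟩ := hL.exists_quadrangle
  have hs' : 3 ≤ #(s.erase p) := by have := pred_card_le_card_erase (a := p) (s := s); omega
  obtain ⟨a, ha⟩ := card_pos.mp (by omega : 0 < #(s.erase p))
  have hap := ne_of_mem_erase ha
  obtain ⟨ℓ, ⟨hℓ, hpℓ, haℓ⟩, -⟩ := hL.existsUnique_line p a hap.symm
  have hsub : s.erase p ⊆ s ∩ ℓ := fun x hx ↦ by
    refine mem_inter.mpr ⟨mem_of_mem_erase hx, ?_⟩
    obtain rfl | hxa := eq_or_ne x a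
    · exact haℓ
    obtain ⟨ℓ', ⟨hℓ', hxℓ', haℓ'⟩, -⟩ := hL.existsUnique_line x a hxa
    exact hL.eq_of_mem_of_mem hap.symm hℓ hℓ' hpℓ haℓ (hall ℓ' hℓ') haℓ' ▸ hxℓ'
  have := card_le_card hsub
  have := hs2 ℓ hℓ
  omega

/-- Each line through `p` meets a line `ℓ₀ ∌ p` in exactly one point, and each point of `ℓ₀`
lies on exactly one line through `p`. -/
theorem card_filter_mem (p : P) : #{ℓ ∈ L | p ∈ ℓ} = q + 1 := by
  obtain ⟨ℓ₀, hℓ₀, hpℓ₀⟩ := hL.exists_not_mem p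
  have hcount := Finset.sum_card_inter (s := ℓ₀) (B := {ℓ ∈ L | p ∈ ℓ}) (n := 1) fun x hx ↦ by
    rw [filter_filter]
    exact hL.card_filter_mem_mem (ne_of_mem_of_not_mem hx hpℓ₀).symm
  rwa [sum_congr rfl fun ℓ hℓ ↦ ?_, ← card_eq_sum_ones, hL.card_line ℓ₀ hℓ₀, mul_one] at hcount
  obtain ⟨hℓL, hpℓ⟩ := mem_filter.mp hℓ
  exact hL.card_inter_eq_one hℓ₀ hℓL fun h ↦ hpℓ₀ (h ▸ hpℓ)

/-- Every line other than `ℓ₀` meets `ℓ₀` in exactly one point, and each point of `ℓ₀` lies on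
`q` lines other than `ℓ₀`. -/
theorem card_eq : #L = q ^ 2 + q + 1 := by
  obtain ⟨ℓ₀, hℓ₀⟩ := hL.nonempty
  have hcount := Finset.sum_card_inter (s := ℓ₀) (B := L.erase ℓ₀) (n := q) fun x hx ↦ by
    rw [filter_erase, card_erase_of_mem (mem_filter.mpr ⟨hℓ₀, hx⟩), hL.card_filter_mem x]
    rfl
  rw [sum_congr rfl fun ℓ hℓ ↦ hL.card_inter_eq_one hℓ₀ (mem_of_mem_erase hℓ)
    (ne_of_mem_erase hℓ).symm, ← card_eq_sum_ones, card_erase_of_mem hℓ₀,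
    hL.card_line ℓ₀ hℓ₀] at hcount
  rw [← Nat.sub_add_cancel (card_pos.mpr ⟨ℓ₀, hℓ₀⟩), hcount]
  ring

theorem sum_card_inter (A : Finset P) : ∑ ℓ ∈ L, #(A ∩ ℓ) = #A * (q + 1) :=
  Finset.sum_card_inter fun a _ ↦ hL.card_filter_mem a

theorem sum_card_offDiag_inter (A : Finset P) : ∑ ℓ ∈ L, #(A ∩ ℓ).offDiag = #A.offDiag := by
  have hcount := sum_card_bipartiteAbove_eq_sum_card_bipartiteBelow (s := L) (t := A.offDiag)
    (r := fun ℓ x ↦ x.1 ∈ ℓ ∧ x.2 ∈ ℓ)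
  unfold bipartiteBelow at hcount
  rw [sum_congr rfl fun x hx ↦ hL.card_filter_mem_mem (mem_offDiag.mp hx).2.2,
    ← card_eq_sum_ones] at hcount
  rw [← hcount]
  refine sum_congr rfl fun ℓ _ ↦ congrArg card ?_
  ext x
  simp only [mem_offDiag, mem_inter, mem_bipartiteAbove]
  tauto

theorem sum_sq_card_inter (A : Finset P) : ∑ ℓ ∈ L, #(A ∩ ℓ) ^ 2 = #A * (#A + q) := by
  have hsq (B : Finset P) : #B ^ 2 = #B.offDiag + #B := by
    rw [offDiag_card, sq, Nat.sub_add_cancel (Nat.le_mul_self _)]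
  simp only [hsq, sum_add_distrib, hL.sum_card_offDiag_inter, hL.sum_card_inter]
  have := hsq A
  linarith

/-- Cauchy–Schwarz over the lines meeting `A`, with both moments of `ℓ ↦ #(A ∩ ℓ)` known. -/
theorem card_filter_disjoint_mul_card_le (A : Finset P) :
    #{ℓ ∈ L | Disjoint ℓ A} * #A ≤ q * (q ^ 2 + q + 1) := by
  have hsplit := card_filter_add_card_filter_not (s := L) (fun ℓ ↦ #(A ∩ ℓ) ≠ 0)
  have hcs := sq_sum_le_card_filter_ne_zero_mul_sum_sq L fun ℓ ↦ #(A ∩ ℓ)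
  simp only [not_not, card_eq_zero, ← disjoint_iff_inter_eq_empty, disjoint_comm (a := A),
    hL.card_eq] at hsplit
  rw [hL.sum_card_inter, hL.sum_sq_card_inter] at hcs
  obtain hA | hA := (#A).eq_zero_or_pos
  · simp [hA]
  have hcs' : #A * (q + 1) ^ 2 ≤ #{ℓ ∈ L | #(A ∩ ℓ) ≠ 0} * (#A + q) :=
    le_of_mul_le_mul_left (by nlinarith [hcs]) hA
  nlinarith

theorem card_filter_disjoint_le_div {c : ℝ} (hc : 0 < c) {A : Finset P}
    (hA : c * (q ^ 2 + q + 1) ≤ #A) : (#{ℓ ∈ L | Disjoint ℓ A} : ℝ) ≤ q / c := by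
  have hbound : (#{ℓ ∈ L | Disjoint ℓ A} * #A : ℝ) ≤ q * (q ^ 2 + q + 1) := by
    exact_mod_cast hL.card_filter_disjoint_mul_card_le A
  have hn : (0 : ℝ) < q ^ 2 + q + 1 := by positivity
  rw [le_div_iff₀ hc]
  nlinarith

end IsProjectivePlane

theorem most_lines_meet_all_parts_general
    (q : ℕ)
    (P : Type) [DecidableEq P]
    (L : Finset (Finset P))
    (h1 : ∀ p₁ p₂ : P, p₁ ≠ p₂ → ∃! ℓ, ℓ ∈ L ∧ p₁ ∈ ℓ ∧ p₂ ∈ ℓ)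
    (h2 : ∀ ℓ₁ ∈ L, ∀ ℓ₂ ∈ L, ℓ₁ ≠ ℓ₂ → ∃! p : P, p ∈ ℓ₁ ∧ p ∈ ℓ₂)
    (h3 : ∀ ℓ ∈ L, ℓ.card = q + 1)
    (h4 : ∃ s : Finset P, s.card = 4 ∧ ∀ ℓ ∈ L, (s ∩ ℓ).card ≤ 2)
    (n : ℕ) (hn : n = q ^ 2 + q + 1)
    (d : ℕ) (c : ℝ) (hc : 0 < c)
    (Ps : Fin (d + 1) → Finset P)
    (hsize : ∀ i, c * (n : ℝ) ≤ ((Ps i).card : ℝ))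
    (hbig : ((2 * ((d : ℝ) + 1) / c) ^ 2) ≤ (n : ℝ)) :
    ((L.filter (fun ℓ => ∀ i, (ℓ ∩ Ps i).Nonempty)).card : ℝ) ≥ (L.card : ℝ) / 2 := by
  have hL : IsProjectivePlane q L := ⟨h1, h2, h3, h4⟩
  have hnR : (n : ℝ) = q ^ 2 + q + 1 := by rw [hn]; push_cast; ring
  have hcard : (#L : ℝ) = n := by rw [hL.card_eq, hn]
  have hsplit : (#{ℓ ∈ L | ∀ i, (ℓ ∩ Ps i).Nonempty} + #{ℓ ∈ L | ∃ i, Disjoint ℓ (Ps i)} : ℝ)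
      = #L := by
    have := card_filter_add_card_filter_not (s := L) fun ℓ ↦ ∀ i, (ℓ ∩ Ps i).Nonempty
    simp only [not_forall, not_nonempty_iff_eq_empty, ← disjoint_iff_inter_eq_empty] at this
    exact_mod_cast this
  have hbad : (#{ℓ ∈ L | ∃ i, Disjoint ℓ (Ps i)} : ℝ) ≤ (d + 1) * (q / c) := by
    calc (#{ℓ ∈ L | ∃ i, Disjoint ℓ (Ps i)} : ℝ)
        ≤ ∑ i, (#{ℓ ∈ L | Disjoint ℓ (Ps i)} : ℝ) := by
          exact_mod_cast card_filter_exists_le_sum L fun i ℓ ↦ Disjoint ℓ (Ps i)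
      _ ≤ ∑ _i : Fin (d + 1), (q / c : ℝ) :=
          sum_le_sum fun i _ ↦ hL.card_filter_disjoint_le_div hc (hnR ▸ hsize i)
      _ = (d + 1) * (q / c) := by simp
  have hhalf : (d + 1) * (q / c : ℝ) ≤ n / 2 := by
    have ht : (d + 1) * (q / c : ℝ) = 2 * (d + 1) / c * q / 2 := by field_simp
    nlinarith [sq_nonneg (2 * (d + 1) / c - q)]
  linarith

theorem most_lines_meet_all_parts
    (q : ℕ) (hq : 2 ≤ q)
    (P : Type) [Fintype P] [DecidableEq P]
    (L : Finset (Finset P))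
    (h1 : ∀ p₁ p₂ : P, p₁ ≠ p₂ → ∃! ℓ, ℓ ∈ L ∧ p₁ ∈ ℓ ∧ p₂ ∈ ℓ)
    (h2 : ∀ ℓ₁ ∈ L, ∀ ℓ₂ ∈ L, ℓ₁ ≠ ℓ₂ → ∃! p : P, p ∈ ℓ₁ ∧ p ∈ ℓ₂)
    (h3 : ∀ ℓ ∈ L, ℓ.card = q + 1)
    (h4 : ∃ s : Finset P, s.card = 4 ∧ ∀ ℓ ∈ L, (s ∩ ℓ).card ≤ 2)
    (n : ℕ) (hn : n = q ^ 2 + q + 1)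
    (d : ℕ) (c : ℝ) (hc : 0 < c)
    (Ps : Fin (d + 1) → Finset P)
    (hdisj : ∀ i j, i ≠ j → Disjoint (Ps i) (Ps j))
    (hsize : ∀ i, c * (n : ℝ) ≤ ((Ps i).card : ℝ))
    (hbig : ((2 * ((d : ℝ) + 1) / c) ^ 2) ≤ (n : ℝ)) :
    ((L.filter (fun ℓ => ∀ i, (ℓ ∩ Ps i).Nonempty)).card : ℝ) ≥ (L.card : ℝ) / 2 :=
  most_lines_meet_all_parts_general q P L h1 h2 h3 h4 n hn d c hc Ps hsize hbig
end

section
/- Let C_1, ..., C_n be a finite family of nonempty subsets of R^d such that every nonempty intersection pattern is witnessed. Define, for each nonempty S ⊆ [n] with ⋂_{i∈S} C_i ≠ ∅, a point y_S in that intersection, and set C'_i = conv{y_S : i ∈ S, ⋂_{j∈S} C_j ≠ ∅}. If each C_i is convex, then for every S ⊆ [n], ⋂_{i∈S} C'_i ≠ ∅ if and only if ⋂_{i∈S} C_i ≠ ∅; moreover each C'_i is compact. -/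
theorem compact_representatives_same_nerve
    (d n : ℕ)
    (C : Fin n → Set (Fin d → ℝ))
    (hconv : ∀ i, Convex ℝ (C i))
    (hne : ∀ i, (C i).Nonempty)
    (y : Finset (Fin n) → (Fin d → ℝ))
    (hy : ∀ S : Finset (Fin n), S.Nonempty → (⋂ i ∈ S, C i).Nonempty →
      y S ∈ ⋂ i ∈ S, C i)
    (C' : Fin n → Set (Fin d → ℝ))
    (hC' : ∀ i, C' i = convexHull ℝ
      {x | ∃ S : Finset (Fin n), i ∈ S ∧ (⋂ j ∈ S, C j).Nonempty ∧ x = y S}) :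
    (∀ S : Finset (Fin n), (⋂ i ∈ S, C' i).Nonempty ↔ (⋂ i ∈ S, C i).Nonempty) ∧
    (∀ i, IsCompact (C' i)) := by
  have hsub : ∀ i, C' i ⊆ C i := by
    intro i
    rw [hC' i]
    apply convexHull_min _ (hconv i)
    rintro x ⟨S, hiS, hSne, rfl⟩
    exact Set.mem_iInter₂.mp (hy S ⟨i, hiS⟩ hSne) i hiS
  constructor
  · intro S
    constructor
    · rintro ⟨x, hx⟩
      exact ⟨x, Set.mem_iInter₂.mpr fun i hi => hsub i (Set.mem_iInter₂.mp hx i hi)⟩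
    · intro hS
      rcases S.eq_empty_or_nonempty with rfl | hSne
      · simp
      · refine ⟨y S, Set.mem_iInter₂.mpr fun i hi => ?_⟩
        rw [hC' i]
        exact subset_convexHull ℝ _ ⟨S, hi, hS, rfl⟩
  · intro i
    rw [hC' i]
    apply Set.Finite.isCompact_convexHull
    apply (Set.finite_range y).subset
    rintro x ⟨S, _, _, rfl⟩
    exact ⟨S, rfl⟩
end
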